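/- arXiv:1005.2216 — 2 statements merged into one kernel-verified Lean document; each statement's English description precedes it below -/
import Mathlib

section
/- A partial permutation π with a single hole at position j avoids the pattern 1324 if and only if: (1) the left part avoids 132; (2) the elements of the left part smaller than the right maximum form a decreasing sequence; (3) the right part avoids 213; and (4) the elements of the right part larger than the left minimum form a decreasing sequence. -/
open Finset

/-- The word `σ` contains the pattern `p`: there is a subsequence of `σ`
order-isomorphic to `p`. -/
def ContainsPat {n ℓ : ℕ} {α β : Type*} [LinearOrder α] [LinearOrder β]
    (σ : Fin n → α) (p : Fin ℓ → β) : Prop :=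
  ∃ g : Fin ℓ → Fin n, StrictMono g ∧ ∀ a b : Fin ℓ, σ (g a) < σ (g b) ↔ p a < p b

/-- `σ ∈ S_n` is an extension of the partial permutation `π`: on the non-hole
positions, the relative order of the values of `σ` matches that of `π`. -/
def IsExtension {n : ℕ} {α : Type*} [LinearOrder α]
    (σ : Equiv.Perm (Fin n)) (π : Fin n → Option α) : Prop :=
  ∀ i j : Fin n, ∀ vi vj : α, π i = some vi → π j = some vj → (σ i < σ j ↔ vi < vj)

/-- The partial permutation `π` avoids the pattern `p`: every extension avoids `p`. -/
def PPAvoids {n ℓ : ℕ} {α β : Type*} [LinearOrder α] [LinearOrder β]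
    (π : Fin n → Option α) (p : Fin ℓ → β) : Prop :=
  ∀ σ : Equiv.Perm (Fin n), IsExtension σ π → ¬ ContainsPat (⇑σ) p

/-- `π` is a partial permutation of length `n` with `k` holes: each value of
`{1,…,n-k}` appears exactly once and there are exactly `k` holes. -/
def IsPPerm {n : ℕ} (k : ℕ) (π : Fin n → Option (Fin (n - k))) : Prop :=
  (Finset.univ.filter fun i => π i = none).card = k ∧
    ∀ v : Fin (n - k), ∃! i : Fin n, π i = some v

/-- `π` is a partial permutation whose holes are exactly at the positions in `H`. -/
def IsPPermH {n : ℕ} (H : Finset (Fin n)) (π : Fin n → Option (Fin (n - H.card))) : Prop :=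
  (∀ i, π i = none ↔ i ∈ H) ∧ ∀ v : Fin (n - H.card), ∃! i : Fin n, π i = some v

/-- `s_n^k(p)`: the number of `p`-avoiding partial permutations of length `n`
with `k` holes. -/
noncomputable def snk (n k : ℕ) {ℓ : ℕ} (p : Fin ℓ → Fin ℓ) : ℕ :=
  Nat.card {π : Fin n → Option (Fin (n - k)) // IsPPerm k π ∧ PPAvoids π p}

/-- `s_n^H(p)`: the number of `p`-avoiding partial permutations of length `n`
with hole set `H`. -/
noncomputable def snH {n ℓ : ℕ} (H : Finset (Fin n)) (p : Fin ℓ → Fin ℓ) : ℕ :=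
  Nat.card {π : Fin n → Option (Fin (n - H.card)) // IsPPermH H π ∧ PPAvoids π p}

/-- The number of permutations of length `m` avoiding the pattern `p`. -/
noncomputable def avoidCount (m : ℕ) {ℓ : ℕ} (p : Fin ℓ → Fin ℓ) : ℕ :=
  Nat.card {σ : Equiv.Perm (Fin m) // ¬ ContainsPat (⇑σ) p}

/-- `p` is a Baxter permutation: no indices `a < b < c = b+1 < d` such that
`(p a, p b, p c, p d)` is order-isomorphic to `2413` or `3142`. -/
def IsBaxter {ℓ : ℕ} (p : Fin ℓ → Fin ℓ) : Prop :=
  ¬ ∃ a b c d : Fin ℓ, a < b ∧ (b : ℕ) + 1 = (c : ℕ) ∧ c < d ∧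
    ((p c < p a ∧ p a < p d ∧ p d < p b) ∨ (p b < p d ∧ p d < p a ∧ p a < p c))

/-!
Locate an occurrence `a < b < c < d` of `1324` in an extension by where the hole `j` falls: if
`j < b`, then `b c d` is a `213` in the right part; if `c < j`, then `a b c` is a `132` in the
left part; if `j = b`, then `c d` is an increasing pair above the left entry `a`, and if
`b < j ≤ c`, then `a b` is an increasing pair below the right entry `d`. Conversely each such
configuration becomes a `1324` once the hole is filled with the maximum, the minimum, or the
value just above the smaller entry of the increasing pair.
-/

theorem containsPat_of_comp_eq {n ℓ : ℕ} {α β : Type*} [LinearOrder α] [LinearOrder β]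
    {σ : Fin n → α} {p : Fin ℓ → β} {g : Fin ℓ → Fin n} {f : β → α}
    (hg : StrictMono g) (hf : StrictMono f) (h : ∀ i, σ (g i) = f (p i)) : ContainsPat σ p :=
  ⟨g, hg, fun a b => by rw [h, h, hf.lt_iff_lt]⟩

theorem containsPat_1324_iff {n : ℕ} {α : Type*} [LinearOrder α] (σ : Fin n → α) :
    ContainsPat σ (![0, 2, 1, 3] : Fin 4 → Fin 4) ↔
      ∃ a b c d, a < b ∧ b < c ∧ c < d ∧ σ a < σ c ∧ σ c < σ b ∧ σ b < σ d := by
  constructor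
  · rintro ⟨g, hg, hp⟩
    exact ⟨g 0, g 1, g 2, g 3, hg (by decide), hg (by decide), hg (by decide),
      (hp 0 2).2 (by decide), (hp 2 1).2 (by decide), (hp 1 3).2 (by decide)⟩
  · rintro ⟨a, b, c, d, hab, hbc, hcd, hac, hcb, hbd⟩
    refine containsPat_of_comp_eq (g := ![a, b, c, d]) (f := ![σ a, σ c, σ b, σ d])
      (Fin.strictMono_iff_lt_succ.2 fun i => ?_) (Fin.strictMono_iff_lt_succ.2 fun i => ?_)
      fun i => ?_ <;> fin_cases i <;> first | assumption | rfl

section Conditions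

variable {n : ℕ} {α : Type*} [LinearOrder α] (π : Fin n → Option α) (j : Fin n)

def LeftAvoids132 : Prop :=
  ∀ a b c : Fin n, ∀ va vb vc : α, a < b → b < c → c < j →
    π a = some va → π b = some vb → π c = some vc → ¬ (va < vc ∧ vc < vb)

def LeftDecreasingBelowRight : Prop :=
  ∀ a b : Fin n, ∀ va vb : α, a < b → b < j → π a = some va → π b = some vb →
    (∃ r : Fin n, ∃ vr, j < r ∧ π r = some vr ∧ va < vr) →
    (∃ r : Fin n, ∃ vr, j < r ∧ π r = some vr ∧ vb < vr) → vb < va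

def RightAvoids213 : Prop :=
  ∀ a b c : Fin n, ∀ va vb vc : α, j < a → a < b → b < c →
    π a = some va → π b = some vb → π c = some vc → ¬ (vb < va ∧ va < vc)

def RightDecreasingAboveLeft : Prop :=
  ∀ a b : Fin n, ∀ va vb : α, j < a → a < b → π a = some va → π b = some vb →
    (∃ l : Fin n, ∃ vl, l < j ∧ π l = some vl ∧ vl < va) →
    (∃ l : Fin n, ∃ vl, l < j ∧ π l = some vl ∧ vl < vb) → vb < va

end Conditions

theorem ppAvoids_1324_of_conditions {n : ℕ} {α : Type*} [LinearOrder α]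
    {π : Fin n → Option α} {j : Fin n} (hhole : ∀ i, π i = none → i = j)
    (h132 : LeftAvoids132 π j) (hleft : LeftDecreasingBelowRight π j)
    (h213 : RightAvoids213 π j) (hright : RightDecreasingAboveLeft π j) :
    PPAvoids π (![0, 2, 1, 3] : Fin 4 → Fin 4) := by
  intro σ hext hcont
  obtain ⟨a, b, c, d, hab, hbc, hcd, hac, hcb, hbd⟩ := (containsPat_1324_iff σ).1 hcont
  have val : ∀ i, i ≠ j → ∃ v, π i = some v := fun i hi =>
    Option.ne_none_iff_exists'.1 fun h => hi (hhole i h)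
  rcases lt_trichotomy j b with hjb | rfl | hbj
  · obtain ⟨vb, hvb⟩ := val b hjb.ne'
    obtain ⟨vc, hvc⟩ := val c (hjb.trans hbc).ne'
    obtain ⟨vd, hvd⟩ := val d (hjb.trans (hbc.trans hcd)).ne'
    exact h213 b c d vb vc vd hjb hbc hcd hvb hvc hvd
      ⟨(hext c b vc vb hvc hvb).1 hcb, (hext b d vb vd hvb hvd).1 hbd⟩
  · obtain ⟨va, hva⟩ := val a hab.ne
    obtain ⟨vc, hvc⟩ := val c hbc.ne'
    obtain ⟨vd, hvd⟩ := val d (hbc.trans hcd).ne'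
    have hvac : va < vc := (hext a c va vc hva hvc).1 hac
    have hvcd : vc < vd := (hext c d vc vd hvc hvd).1 (hcb.trans hbd)
    exact (hright c d vc vd hbc hcd hvc hvd ⟨a, va, hab, hva, hvac⟩
      ⟨a, va, hab, hva, hvac.trans hvcd⟩).asymm hvcd
  · obtain ⟨va, hva⟩ := val a (hab.trans hbj).ne
    obtain ⟨vb, hvb⟩ := val b hbj.ne
    rcases lt_or_ge c j with hcj | hjc
    · obtain ⟨vc, hvc⟩ := val c hcj.ne
      exact h132 a b c va vb vc hab hbc hcj hva hvb hvc
        ⟨(hext a c va vc hva hvc).1 hac, (hext c b vc vb hvc hvb).1 hcb⟩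
    · have hjd : j < d := hjc.trans_lt hcd
      obtain ⟨vd, hvd⟩ := val d hjd.ne'
      have hvab : va < vb := (hext a b va vb hva hvb).1 (hac.trans hcb)
      have hvbd : vb < vd := (hext b d vb vd hvb hvd).1 hbd
      exact (hleft a b va vb hab hbj hva hvb ⟨d, vd, hjd, hvd, hvab.trans hvbd⟩
        ⟨d, vd, hjd, hvd, hvbd⟩).asymm hvab

theorem bijective_of_unique_hole {m : ℕ} {π : Fin (m + 1) → Option (Fin m)} {j : Fin (m + 1)}
    (hhole : ∀ i, π i = none ↔ i = j) (hval : ∀ v : Fin m, ∃! i, π i = some v) :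
    Function.Bijective π := by
  refine ⟨fun i k h => ?_, ?_⟩
  · rcases hi : π i with _ | v
    · rw [(hhole i).1 hi, (hhole k).1 (h ▸ hi)]
    · exact (hval v).unique hi (h ▸ hi)
  · rintro (_ | v)
    · exact ⟨j, (hhole j).2 rfl⟩
    · exact (hval v).exists

section HoleFilling

variable {m : ℕ} {π : Fin (m + 1) → Option (Fin m)}

noncomputable def fillHole (hπ : Function.Bijective π) (t : Fin (m + 1)) :
    Equiv.Perm (Fin (m + 1)) :=
  (Equiv.ofBijective π hπ).trans (finSuccEquiv' t).symm

variable (hπ : Function.Bijective π) (t : Fin (m + 1))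

theorem fillHole_of_eq_none {i : Fin (m + 1)} (hi : π i = none) : fillHole hπ t i = t := by
  simp [fillHole, hi]

theorem fillHole_of_eq_some {i : Fin (m + 1)} {v : Fin m} (hi : π i = some v) :
    fillHole hπ t i = t.succAbove v := by
  simp [fillHole, hi]

theorem isExtension_fillHole : IsExtension (fillHole hπ t) π := by
  intro i k vi vk hi hk
  rw [fillHole_of_eq_some hπ t hi, fillHole_of_eq_some hπ t hk, Fin.succAbove_lt_succAbove_iff]

variable {t}

theorem fillHole_lt_fillHole_hole {i j : Fin (m + 1)} {v : Fin m} (hi : π i = some v)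
    (hj : π j = none) (hvt : v.castSucc < t) : fillHole hπ t i < fillHole hπ t j := by
  rw [fillHole_of_eq_some hπ t hi, fillHole_of_eq_none hπ t hj]
  exact (Fin.succAbove_lt_iff_castSucc_lt t v).2 hvt

theorem fillHole_hole_lt_fillHole {i j : Fin (m + 1)} {v : Fin m} (hi : π i = some v)
    (hj : π j = none) (htv : t ≤ v.castSucc) : fillHole hπ t j < fillHole hπ t i := by
  rw [fillHole_of_eq_some hπ t hi, fillHole_of_eq_none hπ t hj]
  exact (Fin.lt_succAbove_iff_le_castSucc t v).2 htv

theorem fillHole_succ_between {a b j : Fin (m + 1)} {va vb : Fin m} (ha : π a = some va)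
    (hb : π b = some vb) (hj : π j = none) (hvab : va < vb) :
    fillHole hπ va.succ a < fillHole hπ va.succ j ∧
      fillHole hπ va.succ j < fillHole hπ va.succ b :=
  ⟨fillHole_lt_fillHole_hole hπ ha hj Fin.castSucc_lt_succ,
    fillHole_hole_lt_fillHole hπ hb hj (Fin.succ_le_castSucc_iff.2 hvab)⟩

end HoleFilling

section Necessity

variable {m : ℕ} {π : Fin (m + 1) → Option (Fin m)} {j : Fin (m + 1)}

theorem leftAvoids132_of_ppAvoids_1324 (hπ : Function.Bijective π) (hj : π j = none)
    (havoid : PPAvoids π (![0, 2, 1, 3] : Fin 4 → Fin 4)) : LeftAvoids132 π j := by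
  rintro a b c va vb vc hab hbc hcj ha hb hc ⟨hac, hcb⟩
  have hext := isExtension_fillHole hπ (Fin.last m)
  exact havoid _ hext <| (containsPat_1324_iff _).2 ⟨a, b, c, j, hab, hbc, hcj,
    (hext a c va vc ha hc).2 hac, (hext c b vc vb hc hb).2 hcb,
    fillHole_lt_fillHole_hole hπ hb hj (Fin.castSucc_lt_last vb)⟩

theorem rightAvoids213_of_ppAvoids_1324 (hπ : Function.Bijective π) (hj : π j = none)
    (havoid : PPAvoids π (![0, 2, 1, 3] : Fin 4 → Fin 4)) : RightAvoids213 π j := by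
  rintro a b c va vb vc hja hab hbc ha hb hc ⟨hba, hac⟩
  have hext := isExtension_fillHole hπ 0
  exact havoid _ hext <| (containsPat_1324_iff _).2 ⟨j, a, b, c, hja, hab, hbc,
    fillHole_hole_lt_fillHole hπ hb hj (Fin.zero_le _), (hext b a vb va hb ha).2 hba,
    (hext a c va vc ha hc).2 hac⟩

theorem lt_of_not_gt_of_injective {a b : Fin (m + 1)} {va vb : Fin m}
    (hπ : Function.Injective π) (hab : a ≠ b) (ha : π a = some va) (hb : π b = some vb)
    (hvab : ¬ vb < va) : va < vb :=
  (not_lt.1 hvab).lt_of_ne fun hv => hab (hπ (by rw [ha, hb, hv]))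

theorem leftDecreasingBelowRight_of_ppAvoids_1324 (hπ : Function.Bijective π) (hj : π j = none)
    (havoid : PPAvoids π (![0, 2, 1, 3] : Fin 4 → Fin 4)) : LeftDecreasingBelowRight π j := by
  rintro a b va vb hab hbj ha hb - ⟨r, vr, hjr, hr, hbr⟩
  by_contra hvba
  have hvab := lt_of_not_gt_of_injective hπ.1 hab.ne ha hb hvba
  have hext := isExtension_fillHole hπ va.succ
  obtain ⟨haj, hjb⟩ := fillHole_succ_between hπ ha hb hj hvab
  exact havoid _ hext <| (containsPat_1324_iff _).2
    ⟨a, b, j, r, hab, hbj, hjr, haj, hjb, (hext b r vb vr hb hr).2 hbr⟩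

theorem rightDecreasingAboveLeft_of_ppAvoids_1324 (hπ : Function.Bijective π) (hj : π j = none)
    (havoid : PPAvoids π (![0, 2, 1, 3] : Fin 4 → Fin 4)) : RightDecreasingAboveLeft π j := by
  rintro a b va vb hja hab ha hb ⟨l, vl, hlj, hl, hla⟩ -
  by_contra hvba
  have hvab := lt_of_not_gt_of_injective hπ.1 hab.ne ha hb hvba
  have hext := isExtension_fillHole hπ va.succ
  obtain ⟨haj, hjb⟩ := fillHole_succ_between hπ ha hb hj hvab
  exact havoid _ hext <| (containsPat_1324_iff _).2
    ⟨l, j, a, b, hlj, hja, hab, (hext l a vl va hl ha).2 hla, haj, hjb⟩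

end Necessity

/-- Structure of `1324`-avoiding partial permutations with one hole at
position `j`: the left part avoids `132`, the left-part elements below the
right maximum decrease, the right part avoids `213`, and the right-part
elements above the left minimum decrease. -/
theorem avoid_1324_one_hole (n : ℕ) (j : Fin n)
    (π : Fin n → Option (Fin (n - 1)))
    (hhole : ∀ i, π i = none ↔ i = j)
    (hval : ∀ v : Fin (n - 1), ∃! i : Fin n, π i = some v) :
    PPAvoids π (![0, 2, 1, 3] : Fin 4 → Fin 4) ↔
      ((∀ a b c : Fin n, ∀ va vb vc : Fin (n - 1), a < b → b < c → c < j →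
          π a = some va → π b = some vb → π c = some vc →
          ¬ (va < vc ∧ vc < vb)) ∧
       (∀ a b : Fin n, ∀ va vb : Fin (n - 1), a < b → b < j →
          π a = some va → π b = some vb →
          (∃ r : Fin n, ∃ vr, j < r ∧ π r = some vr ∧ va < vr) →
          (∃ r : Fin n, ∃ vr, j < r ∧ π r = some vr ∧ vb < vr) →
          vb < va) ∧
       (∀ a b c : Fin n, ∀ va vb vc : Fin (n - 1), j < a → a < b → b < c →
          π a = some va → π b = some vb → π c = some vc →
          ¬ (vb < va ∧ va < vc)) ∧
       (∀ a b : Fin n, ∀ va vb : Fin (n - 1), j < a → a < b →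
          π a = some va → π b = some vb →
          (∃ l : Fin n, ∃ vl, l < j ∧ π l = some vl ∧ vl < va) →
          (∃ l : Fin n, ∃ vl, l < j ∧ π l = some vl ∧ vl < vb) →
          vb < va)) := by
  rcases n with _ | m
  · exact j.elim0
  have hπ := bijective_of_unique_hole hhole hval
  have hj : π j = none := (hhole j).2 rfl
  refine ⟨fun havoid => ⟨leftAvoids132_of_ppAvoids_1324 hπ hj havoid,
      leftDecreasingBelowRight_of_ppAvoids_1324 hπ hj havoid,
      rightAvoids213_of_ppAvoids_1324 hπ hj havoid,
      rightDecreasingAboveLeft_of_ppAvoids_1324 hπ hj havoid⟩, ?_⟩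
  rintro ⟨h132, hleft, h213, hright⟩
  exact ppAvoids_1324_of_conditions (fun i => (hhole i).1) h132 hleft h213 hright
end

section
/- Let k ≥ 0, p a permutation pattern of length ℓ > k, and let q be a consecutive subpattern of p of length ℓ−k. Suppose p has an occurrence of q at consecutive positions i+1,…,i+ℓ−k. For n ≥ k, the partial permutation consisting of i holes, followed by a permutation π′ of length n−k, followed by k−i holes, avoids p if and only if π′ avoids q. Consequently s_n^k(p) ≥ s_{n−k}^0(q). -/
open Finset

/-!
An occurrence of `p` in an extension of the padded partial permutation has only `k` positions
outside the window, so its `ℓ - k` middle entries, which form `q`, land inside the window, where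
the extension is order-isomorphic to `π'`. Conversely, an occurrence of `q` in `π'` extends to an
occurrence of `p` once the holes get suitable values: the hole playing pattern position `a` is put
just above the largest occurrence value it has to exceed, with ties among holes broken by `p a`.
Padding is injective, which gives the inequality.
-/

lemma Fin.val_le_of_strictMono {ℓ n : ℕ} {g : Fin ℓ → Fin n} (hg : StrictMono g) (a : Fin ℓ) :
    (a : ℕ) ≤ g a := by
  have := card_le_card_of_injOn g (s := Iic a) (t := Iic (g a))
    (fun x hx => by simpa using hg.monotone (mem_Iic.1 hx)) hg.injective.injOn
  simpa using this

lemma Fin.val_add_le_of_strictMono {ℓ n : ℕ} {g : Fin ℓ → Fin n} (hg : StrictMono g)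
    (a : Fin ℓ) : (g a : ℕ) + (ℓ - a) ≤ n := by
  have := card_le_card_of_injOn g (s := Ici a) (t := Ici (g a))
    (fun x hx => by simpa using hg.monotone (mem_Ici.1 hx)) hg.injective.injOn
  simp only [Fin.card_Ici] at this
  omega

lemma exists_perm_lt_iff_lt {n : ℕ} {α : Type*} [LinearOrder α] {f : Fin n → α}
    (hf : Function.Injective f) : ∃ σ : Equiv.Perm (Fin n), ∀ s t, σ s < σ t ↔ f s < f t := by
  have hmono : StrictMono (f ∘ Tuple.sort f) :=
    (Tuple.monotone_sort f).strictMono_of_injective (hf.comp (Tuple.sort f).injective)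
  refine ⟨(Tuple.sort f).symm, fun s t => ?_⟩
  simpa using (hmono.lt_iff_lt (a := (Tuple.sort f).symm s) (b := (Tuple.sort f).symm t)).symm

lemma lt_iff_lt_of_lt_imp_lt {ι α γ : Type*} [LinearOrder α] [Preorder γ] {p : ι → α}
    {v : ι → γ} (hp : Function.Injective p) (h : ∀ a b, p a < p b → v a < v b) (a b : ι) :
    v a < v b ↔ p a < p b := by
  refine ⟨fun hv => ?_, h a b⟩
  rcases lt_trichotomy (p a) (p b) with hab | hab | hab
  · exact hab
  · exact absurd (hp hab ▸ hv) (lt_irrefl _)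
  · exact absurd hv (h b a hab).not_gt

namespace ContainsPat

variable {n ℓ : ℕ} {α α' β γ : Type*} [LinearOrder α] [LinearOrder α'] [LinearOrder β]
  [LinearOrder γ]

lemma of_lt_iff_lt {σ : Fin n → α} {τ : Fin n → α'} {p : Fin ℓ → β}
    (hστ : ∀ s t, σ s < σ t ↔ τ s < τ t) (h : ContainsPat σ p) : ContainsPat τ p := by
  obtain ⟨g, hg, hiso⟩ := h
  exact ⟨g, hg, fun a b => (hστ _ _).symm.trans (hiso a b)⟩

lemma of_lt_iff_lt_pattern {σ : Fin n → α} {p : Fin ℓ → β} {q : Fin ℓ → γ}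
    (hpq : ∀ a b, p a < p b ↔ q a < q b) (h : ContainsPat σ p) : ContainsPat σ q := by
  obtain ⟨g, hg, hiso⟩ := h
  exact ⟨g, hg, fun a b => (hiso a b).trans (hpq a b)⟩

end ContainsPat

def windowPos {i w n : ℕ} (h : i + w ≤ n) (s : Fin w) : Fin n := ⟨i + s, by omega⟩

lemma windowPos_strictMono {i w n : ℕ} (h : i + w ≤ n) : StrictMono (windowPos h) :=
  fun s t hst => by simp only [windowPos, Fin.mk_lt_mk]; omega

@[simp]
lemma val_windowPos {i w n : ℕ} (h : i + w ≤ n) (s : Fin w) : (windowPos h s : ℕ) = i + s := rfl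

def padWithHoles (n i : ℕ) {w : ℕ} {α : Type*} (τ : Fin w → α) (t : Fin n) : Option α :=
  if h : i ≤ (t : ℕ) ∧ (t : ℕ) < i + w then some (τ ⟨(t : ℕ) - i, by omega⟩) else none

section padWithHoles

variable {n i w : ℕ} {α : Type*}

lemma padWithHoles_windowPos (h : i + w ≤ n) (τ : Fin w → α) (s : Fin w) :
    padWithHoles n i τ (windowPos h s) = some (τ s) := by
  simp [padWithHoles]

lemma padWithHoles_eq_some_iff (h : i + w ≤ n) (τ : Fin w → α) {t : Fin n} {v : α} :
    padWithHoles n i τ t = some v ↔ ∃ s, windowPos h s = t ∧ τ s = v := by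
  constructor
  · intro ht
    unfold padWithHoles at ht
    split_ifs at ht with hw
    exact ⟨⟨t - i, by omega⟩, Fin.ext (by simp; omega), Option.some.inj ht⟩
  · rintro ⟨s, rfl, rfl⟩
    exact padWithHoles_windowPos h τ s

lemma padWithHoles_eq_none_iff (h : i + w ≤ n) (τ : Fin w → α) {t : Fin n} :
    padWithHoles n i τ t = none ↔ t ∉ Set.range (windowPos h) := by
  simp only [Option.eq_none_iff_forall_ne_some, ne_eq, padWithHoles_eq_some_iff h, Set.mem_range]
  grind

lemma padWithHoles_injective (h : i + w ≤ n) :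
    Function.Injective (padWithHoles n i : (Fin w → α) → Fin n → Option α) :=
  fun τ τ' hττ' => funext fun s => Option.some.inj <| by
    rw [← padWithHoles_windowPos h, ← padWithHoles_windowPos h, hττ']

lemma isExtension_padWithHoles_iff [LinearOrder α] (h : i + w ≤ n) (τ : Fin w → α)
    (σ : Equiv.Perm (Fin n)) :
    IsExtension σ (padWithHoles n i τ) ↔
      ∀ s t, σ (windowPos h s) < σ (windowPos h t) ↔ τ s < τ t := by
  constructor
  · exact fun hσ s t => hσ _ _ _ _ (padWithHoles_windowPos h τ s) (padWithHoles_windowPos h τ t)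
  · intro hσ s t vs vt hs ht
    obtain ⟨s, rfl, rfl⟩ := (padWithHoles_eq_some_iff h τ).1 hs
    obtain ⟨t, rfl, rfl⟩ := (padWithHoles_eq_some_iff h τ).1 ht
    exact hσ s t

end padWithHoles

lemma isPPerm_padWithHoles {n k i : ℕ} (hk : k ≤ n) (h : i + (n - k) ≤ n)
    (π : Equiv.Perm (Fin (n - k))) : IsPPerm k (padWithHoles n i π) := by
  classical
  refine ⟨?_, fun v => ⟨windowPos h (π.symm v), by simp [padWithHoles_windowPos h], ?_⟩⟩
  · have hholes : univ.filter (fun t => padWithHoles n i π t = none) =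
        (univ.image (windowPos h))ᶜ := by
      ext t
      simp [padWithHoles_eq_none_iff h π]
    rw [hholes, card_compl, card_image_of_injective _ (windowPos_strictMono h).injective]
    simp only [Fintype.card_fin, card_univ]
    omega
  · intro t ht
    obtain ⟨s, rfl, hs⟩ := (padWithHoles_eq_some_iff h π).1 ht
    rw [← hs, Equiv.symm_apply_apply]

lemma ContainsPat.comp_windowPos {n ℓ m w i : ℕ} {α β : Type*} [LinearOrder α] [LinearOrder β]
    {σ : Fin n → α} {p : Fin ℓ → β} (h : ContainsPat σ p) (hi : i + m ≤ ℓ) (hw : i + w ≤ n)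
    (hwn : n + m ≤ w + ℓ) : ContainsPat (σ ∘ windowPos hw) (p ∘ windowPos hi) := by
  obtain ⟨g, hg, hiso⟩ := h
  have hwindow (c : Fin m) : i ≤ g (windowPos hi c) ∧ (g (windowPos hi c) : ℕ) < i + w := by
    have := Fin.val_le_of_strictMono hg (windowPos hi c)
    have := Fin.val_add_le_of_strictMono hg (windowPos hi c)
    simp only [val_windowPos] at *
    omega
  let g' (c : Fin m) : Fin w := ⟨g (windowPos hi c) - i, by have := hwindow c; omega⟩
  have hg' (c : Fin m) : windowPos hw (g' c) = g (windowPos hi c) := by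
    ext
    simp only [val_windowPos, g']
    have := hwindow c
    omega
  refine ⟨g', fun a b hab => (windowPos_strictMono hw).lt_iff_lt.1 ?_, fun a b => ?_⟩
  · simpa only [hg'] using hg (windowPos_strictMono hi hab)
  · simpa only [Function.comp_apply, hg'] using hiso _ _

section holeVal

variable {ℓ m : ℕ} {β δ : Type*} [LinearOrder β] [LinearOrder δ]
  (p : Fin ℓ → β) (e : Fin m → Fin ℓ) (u : Fin m → δ)

-- A window entry `x` is encoded as `toLex (↑x, ⊥)`, so a hole whose first coordinate is `↑x`
-- lies just above `x` and below every larger window entry.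
def holeVal (a : Fin ℓ) : WithBot δ ×ₗ WithBot β :=
  toLex ((univ.filter fun c => p (e c) < p a).sup (fun c => (u c : WithBot δ)), (p a : WithBot β))

variable {p e u}

lemma holeVal_lt_holeVal {a b : Fin ℓ} (h : p a < p b) : holeVal p e u a < holeVal p e u b := by
  refine Prod.Lex.toLex_lt_toLex'.2 ⟨?_, fun _ => WithBot.coe_lt_coe.2 h⟩
  dsimp only
  refine Finset.sup_mono fun c => ?_
  simp only [mem_filter, mem_univ, true_and]
  exact (·.trans h)

lemma toLex_lt_holeVal {c : Fin m} {a : Fin ℓ} (h : p (e c) < p a) :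
    toLex ((u c : WithBot δ), (⊥ : WithBot β)) < holeVal p e u a := by
  refine Prod.Lex.toLex_lt_toLex'.2 ⟨?_, fun _ => WithBot.bot_lt_coe _⟩
  dsimp only
  exact Finset.le_sup (f := fun c => (u c : WithBot δ)) (by simpa using h)

lemma holeVal_lt_toLex (hu : ∀ c c', p (e c) < p (e c') → u c < u c') {a : Fin ℓ} {c : Fin m}
    (h : p a < p (e c)) : holeVal p e u a < toLex ((u c : WithBot δ), (⊥ : WithBot β)) := by
  refine Prod.Lex.toLex_lt_toLex.2 (Or.inl ?_)
  dsimp only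
  refine (Finset.sup_lt_iff (WithBot.bot_lt_coe _)).2 fun c' hc' => ?_
  simp only [mem_filter, mem_univ, true_and] at hc'
  exact WithBot.coe_lt_coe.2 (hu c' c (hc'.trans h))

lemma holeVal_ne_toLex (a : Fin ℓ) (x : δ) :
    holeVal p e u a ≠ toLex ((x : WithBot δ), (⊥ : WithBot β)) :=
  fun h => WithBot.coe_ne_bot (congrArg (fun y => (ofLex y).2) h)

lemma holeVal_injective (hp : Function.Injective p) : Function.Injective (holeVal p e u) :=
  fun _ _ h => hp (WithBot.coe_injective (congrArg (fun y => (ofLex y).2) h))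

lemma lt_of_forall_eq_holeVal_or (hu : ∀ c c', p (e c) < p (e c') → u c < u c')
    {v : Fin ℓ → WithBot δ ×ₗ WithBot β}
    (hv : ∀ a, (∃ c, e c = a ∧ v a = toLex ((u c : WithBot δ), ⊥)) ∨ v a = holeVal p e u a)
    {a b : Fin ℓ} (h : p a < p b) : v a < v b := by
  rcases hv a with ⟨c, rfl, hva⟩ | hva <;> rcases hv b with ⟨c', rfl, hvb⟩ | hvb <;>
    rw [hva, hvb]
  · exact Prod.Lex.toLex_lt_toLex.2 (Or.inl (WithBot.coe_lt_coe.2 (hu c c' h)))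
  · exact toLex_lt_holeVal h
  · exact holeVal_lt_toLex hu h
  · exact holeVal_lt_holeVal h

end holeVal

section fillHoles

variable {n ℓ m w i : ℕ} {β δ : Type*} [LinearOrder β] [LinearOrder δ]

def patternPos (hi : i + m ≤ ℓ) (hwn : w + ℓ = n + m) (g : Fin m → Fin w) (a : Fin ℓ) : Fin n :=
  if h : (a : ℕ) < i then ⟨a, by omega⟩
  else if h' : (a : ℕ) < i + m then ⟨i + g ⟨a - i, by omega⟩, by omega⟩
  else ⟨a + w - m, by omega⟩

def holePos (hi : i + m ≤ ℓ) (hwn : w + ℓ = n + m) (t : Fin n)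
    (ht : ¬(i ≤ (t : ℕ) ∧ (t : ℕ) < i + w)) : Fin ℓ :=
  ⟨if (t : ℕ) < i then t else t + m - w, by split_ifs <;> omega⟩

def fillHoles (hi : i + m ≤ ℓ) (hwn : w + ℓ = n + m) (p : Fin ℓ → β) (τ : Fin w → δ)
    (g : Fin m → Fin w) (t : Fin n) : WithBot δ ×ₗ WithBot β :=
  if h : i ≤ (t : ℕ) ∧ (t : ℕ) < i + w then toLex ((τ ⟨t - i, by omega⟩ : WithBot δ), ⊥)
  else holeVal p (windowPos hi) (τ ∘ g) (holePos hi hwn t h)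

lemma patternPos_strictMono (hi : i + m ≤ ℓ) (hwn : w + ℓ = n + m) {g : Fin m → Fin w}
    (hg : StrictMono g) : StrictMono (patternPos hi hwn g) := by
  intro a b hab
  simp only [patternPos, Fin.lt_def] at hab ⊢
  split_ifs <;> simp only
  all_goals first
    | omega
    | exact Nat.add_lt_add_left (hg (Fin.mk_lt_mk.2 (by omega))) i

variable (hi : i + m ≤ ℓ) (hwn : w + ℓ = n + m) (p : Fin ℓ → β) (τ : Fin w → δ) (g : Fin m → Fin w)

lemma fillHoles_windowPos (hw : i + w ≤ n) (s : Fin w) :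
    fillHoles hi hwn p τ g (windowPos hw s) = toLex ((τ s : WithBot δ), ⊥) := by
  simp [fillHoles]

lemma fillHoles_patternPos (a : Fin ℓ) :
    (∃ c, windowPos hi c = a ∧
      fillHoles hi hwn p τ g (patternPos hi hwn g a) = toLex ((τ (g c) : WithBot δ), ⊥)) ∨
    fillHoles hi hwn p τ g (patternPos hi hwn g a) = holeVal p (windowPos hi) (τ ∘ g) a := by
  by_cases hleft : (a : ℕ) < i
  · right
    have hpos : (patternPos hi hwn g a : ℕ) = a := by simp [patternPos, hleft]
    rw [fillHoles, dif_neg (by omega)]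
    congr
    ext
    simp [holePos, hpos, hleft]
  by_cases hmid : (a : ℕ) < i + m
  · left
    refine ⟨⟨a - i, by omega⟩, Fin.ext (by simp; omega), ?_⟩
    simp [fillHoles, patternPos, hleft, hmid]
  · right
    have hpos : (patternPos hi hwn g a : ℕ) = a + w - m := by simp [patternPos, hleft, hmid]
    rw [fillHoles, dif_neg (by omega)]
    congr
    ext
    simp only [holePos, hpos]
    split_ifs <;> omega

lemma fillHoles_injective (hp : Function.Injective p) (hτ : Function.Injective τ) :
    Function.Injective (fillHoles hi hwn p τ g) := by
  intro s t hst
  unfold fillHoles at hst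
  split_ifs at hst with hs ht ht
  · have := Fin.ext_iff.1 (hτ (WithBot.coe_injective (congrArg (fun y => (ofLex y).1) hst)))
    simp only at this
    omega
  · exact absurd hst.symm (holeVal_ne_toLex _ _)
  · exact absurd hst (holeVal_ne_toLex _ _)
  · have := Fin.ext_iff.1 (holeVal_injective hp hst)
    simp only [holePos] at this
    ext
    split_ifs at this <;> omega

end fillHoles

lemma exists_perm_containsPat_of_containsPat_comp_windowPos {n ℓ m w i : ℕ} {β δ : Type*}
    [LinearOrder β] [LinearOrder δ] {p : Fin ℓ → β} (hp : Function.Injective p)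
    (hi : i + m ≤ ℓ) (hw : i + w ≤ n) (hwn : w + ℓ = n + m) {τ : Fin w → δ}
    (hτ : Function.Injective τ) (h : ContainsPat τ (p ∘ windowPos hi)) :
    ∃ σ : Equiv.Perm (Fin n),
      (∀ s t, σ (windowPos hw s) < σ (windowPos hw t) ↔ τ s < τ t) ∧ ContainsPat σ p := by
  obtain ⟨g, hg, hiso⟩ := h
  obtain ⟨σ, hσ⟩ := exists_perm_lt_iff_lt (fillHoles_injective hi hwn p τ g hp hτ)
  have hpattern (a b : Fin ℓ) (hab : p a < p b) :
      fillHoles hi hwn p τ g (patternPos hi hwn g a) <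
        fillHoles hi hwn p τ g (patternPos hi hwn g b) :=
    lt_of_forall_eq_holeVal_or (p := p) (u := τ ∘ g) (fun c c' => (hiso c c').2)
      (fillHoles_patternPos hi hwn p τ g) hab
  refine ⟨σ, fun s t => ?_, patternPos hi hwn g, patternPos_strictMono hi hwn hg,
    fun a b => (hσ _ _).trans (lt_iff_lt_of_lt_imp_lt hp hpattern a b)⟩
  rw [hσ, fillHoles_windowPos, fillHoles_windowPos, Prod.Lex.toLex_lt_toLex]
  simp

lemma ppAvoids_padWithHoles_iff {n ℓ m w i : ℕ} {β γ δ : Type*} [LinearOrder β] [LinearOrder γ]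
    [LinearOrder δ] {p : Fin ℓ → β} (hp : Function.Injective p) {q : Fin m → γ}
    (hi : i + m ≤ ℓ) (hq : ∀ a b, q a < q b ↔ p (windowPos hi a) < p (windowPos hi b))
    (hw : i + w ≤ n) (hwn : w + ℓ = n + m) {τ : Fin w → δ} (hτ : Function.Injective τ) :
    PPAvoids (padWithHoles n i τ) p ↔ ¬ ContainsPat τ q := by
  constructor
  · intro hav hτq
    obtain ⟨σ, hσ, hσp⟩ := exists_perm_containsPat_of_containsPat_comp_windowPos hp hi hw hwn hτ
      (hτq.of_lt_iff_lt_pattern fun a b => hq a b)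
    exact hav σ ((isExtension_padWithHoles_iff hw τ σ).2 hσ) hσp
  · intro hτq σ hσ hσp
    exact hτq (((hσp.comp_windowPos hi hw hwn.ge).of_lt_iff_lt
      ((isExtension_padWithHoles_iff hw τ σ).1 hσ)).of_lt_iff_lt_pattern fun a b => (hq a b).symm)

/-- If `q` is a consecutive subpattern of `p` occurring at positions
`i+1, …, i+(ℓ-k)`, then the partial permutation consisting of `i` holes,
a permutation `π'` of length `n-k`, and `k-i` holes avoids `p` iff `π'`
avoids `q`; consequently `s_n^k(p) ≥ s_{n-k}^0(q)`. -/
theorem consecutive_subpattern_bound (k ℓ : ℕ) (hℓ : k < ℓ)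
    (p : Fin ℓ → Fin ℓ) (hp : Function.Bijective p)
    (q : Fin (ℓ - k) → Fin (ℓ - k)) (i : ℕ) (hi : i + (ℓ - k) ≤ ℓ)
    (hq : ∀ a b : Fin (ℓ - k),
      q a < q b ↔ p ⟨i + a, by have := a.isLt; omega⟩ < p ⟨i + b, by have := b.isLt; omega⟩)
    (n : ℕ) (hn : k ≤ n) :
    (∀ π' : Equiv.Perm (Fin (n - k)),
      PPAvoids (fun t : Fin n =>
          if h : i ≤ (t : ℕ) ∧ (t : ℕ) < i + (n - k) then
            some (π' ⟨(t : ℕ) - i, by omega⟩) else none) p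
        ↔ ¬ ContainsPat (⇑π') q) ∧
    avoidCount (n - k) q ≤ snk n k p := by
  have hw : i + (n - k) ≤ n := by omega
  have hwn : n - k + ℓ = n + (ℓ - k) := by omega
  have key (π' : Equiv.Perm (Fin (n - k))) :
      PPAvoids (padWithHoles n i π') p ↔ ¬ ContainsPat (⇑π') q :=
    ppAvoids_padWithHoles_iff hp.injective hi hq hw hwn π'.injective
  refine ⟨key, Nat.card_le_card_of_injective
    (fun π' => ⟨padWithHoles n i π'.1, isPPerm_padWithHoles hn hw π'.1, (key π'.1).2 π'.2⟩) ?_⟩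
  intro π₁ π₂ h
  exact Subtype.ext (DFunLike.coe_injective (padWithHoles_injective hw (congrArg Subtype.val h)))
end
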